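/- For any finite set N of agents, finite set M of indivisible items, normalized monotone valuation functions v_i, and any subset P ⊆ N with |N \ P| = 1, there exists a complete allocation (A_1, ..., A_n) of M that is EFprior with respect to P. -/

import Mathlib

/-- `A` is a (complete) allocation of the item set `M` among `n` agents:
a partition of `M` into `n` (possibly empty) bundles. -/
def IsAllocation {ι : Type*} [DecidableEq ι] {n : ℕ} (M : Finset ι)
    (A : Fin n → Finset ι) : Prop :=
  (∀ i j : Fin n, i ≠ j → Disjoint (A i) (A j)) ∧ Finset.univ.biUnion A = M

/-- Envy-freeness up to one item. -/
def EF1 {ι : Type*} [DecidableEq ι] {n : ℕ} (v : Fin n → Finset ι → ℝ)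
    (A : Fin n → Finset ι) : Prop :=
  ∀ i j : Fin n, i ≠ j → A j = ∅ ∨ ∃ g ∈ A j, v i ((A j).erase g) ≤ v i (A i)

/-- Envy-freeness with prioritized agents `P`: EF1, and no agent in `P`
envies any agent outside `P`. -/
def EFprior {ι : Type*} [DecidableEq ι] {n : ℕ} (v : Fin n → Finset ι → ℝ)
    (A : Fin n → Finset ι) (P : Finset (Fin n)) : Prop :=
  EF1 v A ∧ ∀ i ∈ P, ∀ j ∉ P, v i (A j) ≤ v i (A i)

/-!
Add the items one at a time, keeping an EF1 allocation in which the single non-prioritized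
agent `q` is envied by nobody. Before the next item `g` arrives, reshuffle the bundles of the
other agents so that nobody loses and no further such reshuffle is a Pareto improvement; the
envy graph on the agents other than `q` is then acyclic. If some agent other than `q` is
envied by nobody, `g` goes to that agent. Otherwise `g` goes to `q`; if some `i₀` now envies
`q`, walk back along envy edges from `i₀` to an agent `s` envied by nobody but `q`, hence by
`q`. With the edges `q → s` and `i₀ → q` this closes an envy cycle through `q`; rotating the bundles
along it leaves `q` with the bundle of `s`, which nobody envies. In every case `g` lands in a
bundle nobody envied before, and nobody ends up worse off, so EF1 survives.
-/

open Finset Function Equiv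

section Cycles

variable {α : Type*} [DecidableEq α]

def List.IsCycleOf (r : α → α → Prop) (l : List α) : Prop :=
  l ≠ [] ∧ l.Nodup ∧ ∀ x ∈ l, r x (l.formPerm x)

theorem List.isCycleOf_cons {r : α → α → Prop} {a : α} {t : List α} (hnd : (a :: t).Nodup)
    (hchain : (a :: t).IsChain r) (hclose : r ((a :: t).getLast (cons_ne_nil a t)) a) :
    (a :: t).IsCycleOf r := by
  refine ⟨cons_ne_nil a t, hnd, fun x hx => ?_⟩
  obtain ⟨i, hi, rfl⟩ := getElem_of_mem hx
  rcases Nat.lt_succ_iff_lt_or_eq.1 (length_cons (a := a) (as := t) ▸ hi) with hi | rfl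
  · rw [formPerm_apply_lt_getElem _ hnd i (by simpa using hi)]
    exact hchain.getElem i (by simpa using hi)
  · rwa [formPerm_apply_getElem_length, getElem_cons_length rfl]

theorem List.exists_isCycleOf_cons_cons [Fintype α] {r : α → α → Prop} {q i₀ : α}
    (hacyc : ∀ l : List α, q ∉ l → ¬ l.IsCycleOf r) (hi₀ : i₀ ≠ q) (hi₀q : r i₀ q)
    (hpred : ∀ s ≠ q, ∃ j, r j s) :
    ∃ s l, (∀ j ≠ q, ¬ r j s) ∧ (q :: s :: l).IsCycleOf r := by
  -- Take a longest `r`-path avoiding `q` and ending at `i₀`: a predecessor `j ≠ q` of its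
  -- head would either extend it or close a cycle avoiding `q`.
  set paths : Set (List α) := {l | l.Nodup ∧ q ∉ l ∧ l.IsChain r ∧ l.getLast? = some i₀}
  have hbdd : BddAbove (length '' paths) :=
    ⟨Fintype.card α, by rintro _ ⟨l, hl, rfl⟩; exact hl.1.length_le_card⟩
  obtain ⟨l, ⟨hnd, hql, hchain, hlast⟩, hlen⟩ := Nat.sSup_mem (s := length '' paths)
    ⟨1, [i₀], ⟨nodup_singleton i₀, by simpa using hi₀.symm, isChain_singleton i₀, rfl⟩, rfl⟩ hbdd
  have hmax : ∀ l' ∈ paths, l'.length ≤ l.length := fun l' hl' =>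
    hlen ▸ le_csSup hbdd ⟨l', hl', rfl⟩
  obtain _ | ⟨s, t⟩ := l
  · simp at hlast
  have hsrc : ∀ j ≠ q, ¬ r j s := by
    intro j hjq hjs
    by_cases hj : j ∈ s :: t
    · obtain ⟨l₁, l₂, hsplit⟩ := append_of_mem hj
      cases l₁ with
      | nil =>
        obtain ⟨rfl, -⟩ : s = j ∧ t = l₂ := by simpa using hsplit
        exact hacyc [s] (fun h => hql (mem_singleton.1 h ▸ mem_cons_self))
          (isCycleOf_cons (nodup_singleton s) (isChain_singleton s) hjs)
      | cons a l₁ =>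
        obtain ⟨rfl, rfl⟩ : s = a ∧ t = l₁ ++ j :: l₂ := by simpa using hsplit
        have hpre : s :: (l₁ ++ [j]) <+: s :: (l₁ ++ j :: l₂) := ⟨l₂, by simp⟩
        exact hacyc _ (fun h => hql (hpre.subset h))
          (isCycleOf_cons (hnd.sublist hpre.sublist) (hchain.prefix hpre) (by simpa using hjs))
    · have hlonger := hmax (j :: s :: t) ⟨nodup_cons.2 ⟨hj, hnd⟩, by simp [hjq.symm, hql],
        hchain.cons_cons hjs, by simpa using hlast⟩
      simp at hlonger
  refine ⟨s, t, hsrc, isCycleOf_cons (nodup_cons.2 ⟨hql, hnd⟩) (hchain.cons_cons ?_) ?_⟩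
  · obtain ⟨j, hj⟩ := hpred s (fun h => hql (h ▸ mem_cons_self))
    by_contra hqs
    exact hsrc j (by rintro rfl; exact hqs hj) hj
  · rw [getLast?_eq_some_getLast (cons_ne_nil s t), Option.some_inj] at hlast
    rwa [getLast_cons (cons_ne_nil s t), hlast]

end Cycles

section Reshuffle

variable {α β : Type*}

def Unenvied (v : α → β → ℝ) (A : α → β) (k : α) : Prop :=
  ∀ j, v j (A k) ≤ v j (A j)

theorem exists_pareto_reshuffle [Fintype α] (v : α → β → ℝ) (A : α → β)
    (H : Submonoid (Perm α)) :
    ∃ σ ∈ H, (∀ i, v i (A i) ≤ v i (A (σ i))) ∧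
      ∀ τ ∈ H, (∀ i, v i (A (σ i)) ≤ v i (A (σ (τ i)))) →
        ∀ i, v i (A (σ (τ i))) ≤ v i (A (σ i)) := by
  classical
  obtain ⟨σ, hσ, hmax⟩ :=
    (univ.filter fun σ => σ ∈ H ∧ ∀ i, v i (A i) ≤ v i (A (σ i))).exists_max_image
      (fun σ => ∑ i, v i (A (σ i))) ⟨1, by simp [H.one_mem]⟩
  simp only [mem_filter, mem_univ, true_and] at hσ hmax
  refine ⟨σ, hσ.1, hσ.2, fun τ hτ himp i => ?_⟩
  have hsum := hmax (σ * τ) ⟨H.mul_mem hσ.1 hτ, fun i => (hσ.2 i).trans (himp i)⟩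
  exact ((sum_eq_sum_iff_of_le fun i _ => himp i).1
    (le_antisymm (sum_le_sum fun i _ => himp i) hsum) i (mem_univ i)).ge

end Reshuffle

section Allocation

variable {ι : Type*} [DecidableEq ι] {n : ℕ} {M S : Finset ι} {A : Fin n → Finset ι}
  {v : Fin n → Finset ι → ℝ} {g : ι} {t : Fin n}

namespace IsAllocation

theorem subset (hA : IsAllocation S A) (i : Fin n) : A i ⊆ S :=
  hA.2 ▸ subset_biUnion_of_mem A (mem_univ i)

theorem comp_perm (hA : IsAllocation S A) (σ : Perm (Fin n)) :
    IsAllocation S fun i => A (σ i) := by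
  refine ⟨fun i j hij => hA.1 _ _ (σ.injective.ne hij), ?_⟩
  rw [← hA.2]
  ext x
  simp only [mem_biUnion, mem_univ, true_and]
  exact (σ.surjective.exists (p := fun k => x ∈ A k)).symm

theorem update_insert (hA : IsAllocation S A) (hg : g ∉ S) (t : Fin n) :
    IsAllocation (insert g S) (update A t (insert g (A t))) := by
  have hgA : ∀ k, g ∉ A k := fun k hk => hg (hA.subset k hk)
  have hmem : ∀ k x, x ∈ update A t (insert g (A t)) k ↔ (k = t ∧ x = g) ∨ x ∈ A k := by
    intro k x
    rcases eq_or_ne k t with rfl | hk <;> simp [*]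
  refine ⟨fun i j hij => ?_, ?_⟩
  · simp only [update_apply]
    split_ifs with hi hj hj
    · exact absurd (hi.trans hj.symm) hij
    · exact disjoint_insert_left.2 ⟨hgA j, hi ▸ hA.1 i j hij⟩
    · exact disjoint_insert_right.2 ⟨hgA i, hj ▸ hA.1 i j hij⟩
    · exact hA.1 i j hij
  · rw [← hA.2]
    ext x
    simp [hmem, exists_or]

end IsAllocation

variable (hmono : ∀ i : Fin n, ∀ S T : Finset ι, T ⊆ S → S ⊆ M → v i T ≤ v i S)
include hmono

theorem le_update_insert (hAt : A t ⊆ M) (hg : g ∈ M) (i : Fin n) :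
    v i (A i) ≤ v i (update A t (insert g (A t)) i) := by
  rcases eq_or_ne i t with rfl | hit
  · simpa using hmono i _ _ (subset_insert g (A i)) (insert_subset hg hAt)
  · rw [update_of_ne hit]

namespace EF1

theorem exists_erase_le (hAM : ∀ k, A k ⊆ M) (h : EF1 v A) (i k : Fin n) :
    A k = ∅ ∨ ∃ g ∈ A k, v i ((A k).erase g) ≤ v i (A i) := by
  rcases eq_or_ne i k with rfl | hik
  · rcases (A i).eq_empty_or_nonempty with hA | ⟨g, hg⟩
    · exact Or.inl hA
    · exact Or.inr ⟨g, hg, hmono i _ _ (erase_subset g (A i)) (hAM i)⟩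
  · exact h i k hik

theorem comp_perm (hAM : ∀ k, A k ⊆ M) (h : EF1 v A) {σ : Perm (Fin n)}
    (hσ : ∀ i, v i (A i) ≤ v i (A (σ i))) : EF1 v fun i => A (σ i) :=
  fun i j _ => (h.exists_erase_le hmono hAM i (σ j)).imp_right
    fun ⟨g, hg, hle⟩ => ⟨g, hg, hle.trans (hσ i)⟩

theorem update_insert_comp_perm (hAM : ∀ k, A k ⊆ M) (h : EF1 v A) (ht : Unenvied v A t)
    (hg : g ∉ A t) {π : Perm (Fin n)}
    (hπ : ∀ i, v i (A i) ≤ v i (update A t (insert g (A t)) (π i))) :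
    EF1 v fun i => update A t (insert g (A t)) (π i) := by
  intro i j _
  by_cases hjt : π j = t
  · refine Or.inr ⟨g, by simp [hjt], ?_⟩
    simp only [hjt, update_self, erase_insert hg]
    exact (ht i).trans (hπ i)
  · simp only [update_of_ne hjt]
    exact (h.exists_erase_le hmono hAM i (π j)).imp_right
      fun ⟨g', hg', hle⟩ => ⟨g', hg', hle.trans (hπ i)⟩

end EF1

end Allocation

section Step

variable {ι : Type*} [DecidableEq ι] {n : ℕ} {M S : Finset ι} {A C : Fin n → Finset ι}
  {v : Fin n → Finset ι → ℝ} {g : ι} {q : Fin n}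
  (hmono : ∀ i : Fin n, ∀ S T : Finset ι, T ⊆ S → S ⊆ M → v i T ≤ v i S)
include hmono

theorem exists_insert_of_forall_envied (hC : IsAllocation S C) (hSM : S ⊆ M) (hEF : EF1 v C)
    (hq : Unenvied v C q)
    (hpareto : ∀ τ : Perm (Fin n), τ q = q → (∀ i, v i (C i) ≤ v i (C (τ i))) →
      ∀ i, v i (C (τ i)) ≤ v i (C i))
    (henvied : ∀ s ≠ q, ¬ Unenvied v C s) (hgS : g ∉ S)
    (hgq : ¬ Unenvied v (update C q (insert g (C q))) q) :
    ∃ B, IsAllocation (insert g S) B ∧ EF1 v B ∧ Unenvied v B q := by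
  set D := update C q (insert g (C q))
  have hDC : ∀ b ≠ q, D b = C b := fun b hb => update_of_ne hb _ _
  obtain ⟨i₀, hi₀⟩ : ∃ i₀, v i₀ (D i₀) < v i₀ (D q) := by simpa [Unenvied] using hgq
  have hi₀q : i₀ ≠ q := by rintro rfl; exact lt_irrefl _ hi₀
  rw [hDC i₀ hi₀q] at hi₀
  -- Rotating the bundles of `C` along such a cycle would be a Pareto improvement fixing `q`.
  have hacyc : ∀ l : List (Fin n), q ∉ l → ¬ l.IsCycleOf fun a b => v a (C a) < v a (D b) := by
    intro l hql hl
    have hlt : ∀ x ∈ l, v x (C x) < v x (C (l.formPerm x)) := fun x hx => by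
      have hxq := ne_of_mem_of_not_mem (List.formPerm_apply_mem_of_mem hx) hql
      simpa [hDC _ hxq] using hl.2.2 x hx
    have hle : ∀ x, v x (C x) ≤ v x (C (l.formPerm x)) := fun x => by
      by_cases hx : x ∈ l
      · exact (hlt x hx).le
      · rw [List.formPerm_apply_of_notMem hx]
    obtain ⟨x, hx⟩ := List.exists_mem_of_ne_nil l hl.1
    exact (hlt x hx).not_ge (hpareto _ (List.formPerm_apply_of_notMem hql) hle x)
  obtain ⟨s, l, hsrc, hcyc⟩ := List.exists_isCycleOf_cons_cons hacyc hi₀q hi₀ fun s hs => by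
    simpa [Unenvied, hDC s hs] using henvied s hs
  set π := (q :: s :: l).formPerm
  have hsq : s ≠ q := fun h => (List.nodup_cons.1 hcyc.2.1).1 (h ▸ List.mem_cons_self)
  have hπ : ∀ x, v x (C x) ≤ v x (D (π x)) := fun x => by
    by_cases hx : x ∈ q :: s :: l
    · exact (hcyc.2.2 x hx).le
    · have hxq : x ≠ q := (ne_of_mem_of_not_mem List.mem_cons_self hx).symm
      rw [List.formPerm_apply_of_notMem hx, hDC x hxq]
  have hπq : D (π q) = C s := by rw [List.formPerm_apply_head _ _ _ hcyc.2.1, hDC s hsq]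
  refine ⟨_, (hC.update_insert hgS q).comp_perm π,
    hEF.update_insert_comp_perm hmono (fun k => (hC.subset k).trans hSM) hq
      (fun h => hgS (hC.subset q h)) hπ, fun j => ?_⟩
  show v j (D (π q)) ≤ v j (D (π j))
  rcases eq_or_ne j q with rfl | hjq
  · rfl
  · rw [hπq]
    exact (not_lt.1 (hDC s hsq ▸ hsrc j hjq)).trans (hπ j)

theorem exists_insert_of_pareto (hC : IsAllocation S C) (hSM : S ⊆ M) (hEF : EF1 v C)
    (hq : Unenvied v C q)
    (hpareto : ∀ τ : Perm (Fin n), τ q = q → (∀ i, v i (C i) ≤ v i (C (τ i))) →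
      ∀ i, v i (C (τ i)) ≤ v i (C i))
    (hgM : g ∈ M) (hgS : g ∉ S) :
    ∃ B, IsAllocation (insert g S) B ∧ EF1 v B ∧ Unenvied v B q := by
  have hCM : ∀ k, C k ⊆ M := fun k => (hC.subset k).trans hSM
  have hgC : ∀ k, g ∉ C k := fun k h => hgS (hC.subset k h)
  have hgive : ∀ t, Unenvied v C t → Unenvied v (update C t (insert g (C t))) q →
      ∃ B, IsAllocation (insert g S) B ∧ EF1 v B ∧ Unenvied v B q := fun t ht htq =>
    ⟨_, hC.update_insert hgS t, hEF.update_insert_comp_perm hmono hCM ht (hgC t) (π := 1)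
      (le_update_insert hmono (hCM t) hgM), htq⟩
  by_cases hfree : ∃ s ≠ q, Unenvied v C s
  · obtain ⟨s, hsq, hs⟩ := hfree
    refine hgive s hs fun j => ?_
    rw [update_of_ne hsq.symm]
    exact (hq j).trans (le_update_insert hmono (hCM s) hgM j)
  by_cases hgq : Unenvied v (update C q (insert g (C q))) q
  · exact hgive q hq hgq
  push Not at hfree
  exact exists_insert_of_forall_envied hmono hC hSM hEF hq hpareto hfree hgS hgq

theorem exists_insert (hA : IsAllocation S A) (hSM : S ⊆ M) (hEF : EF1 v A)
    (hq : Unenvied v A q) (hgM : g ∈ M) (hgS : g ∉ S) :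
    ∃ B, IsAllocation (insert g S) B ∧ EF1 v B ∧ Unenvied v B q := by
  obtain ⟨σ, hσq, hσ, hpareto⟩ :=
    exists_pareto_reshuffle v A (MulAction.stabilizerSubmonoid (Perm (Fin n)) q)
  rw [MulAction.mem_stabilizerSubmonoid_iff, Perm.smul_def] at hσq
  refine exists_insert_of_pareto hmono (hA.comp_perm σ) hSM
    (hEF.comp_perm hmono (fun k => (hA.subset k).trans hSM) hσ) (fun j => ?_)
    (fun τ hτ => hpareto τ (by rwa [MulAction.mem_stabilizerSubmonoid_iff, Perm.smul_def]))
    hgM hgS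
  simpa [hσq] using (hq j).trans (hσ j)

theorem exists_isAllocation_ef1_unenvied (q : Fin n) :
    ∃ A, IsAllocation M A ∧ EF1 v A ∧ Unenvied v A q := by
  refine Finset.induction_on'
    (motive := fun S => ∃ A, IsAllocation S A ∧ EF1 v A ∧ Unenvied v A q) M
    ⟨fun _ => ∅, ⟨fun _ _ _ => disjoint_empty_left _, by ext; simp⟩, fun _ _ _ => Or.inl rfl,
      fun _ => le_rfl⟩ ?_
  rintro g S hgM hSM hgS ⟨A, hA, hEF, hq⟩
  exact exists_insert hmono hA hSM hEF hq hgM hgS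

end Step

theorem efprior_exists_single_Q_general {ι : Type*} [DecidableEq ι] (n : ℕ) (M : Finset ι)
    (v : Fin n → Finset ι → ℝ)
    (hmono : ∀ i : Fin n, ∀ S T : Finset ι, T ⊆ S → S ⊆ M → v i T ≤ v i S)
    (P : Finset (Fin n))
    (hQ : (Finset.univ \ P).card = 1) :
    ∃ A : Fin n → Finset ι, IsAllocation M A ∧ EFprior v A P := by
  obtain ⟨q, hq⟩ := card_eq_one.1 hQ
  obtain ⟨A, hA, hEF, hAq⟩ := exists_isAllocation_ef1_unenvied hmono q
  refine ⟨A, hA, hEF, fun i _ j hj => ?_⟩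
  obtain rfl : j = q := mem_singleton.1 (hq ▸ mem_sdiff.2 ⟨mem_univ j, hj⟩)
  exact hAq i

/-- If there is exactly one non-prioritized agent, an EFprior allocation
always exists. -/
theorem efprior_exists_single_Q {ι : Type*} [DecidableEq ι] (n : ℕ) (M : Finset ι)
    (v : Fin n → Finset ι → ℝ)
    (hnorm : ∀ i : Fin n, v i ∅ = 0)
    (hnonneg : ∀ i : Fin n, ∀ S ⊆ M, 0 ≤ v i S)
    (hmono : ∀ i : Fin n, ∀ S T : Finset ι, T ⊆ S → S ⊆ M → v i T ≤ v i S)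
    (P : Finset (Fin n))
    (hQ : (Finset.univ \ P).card = 1) :
    ∃ A : Fin n → Finset ι, IsAllocation M A ∧ EFprior v A P :=
  efprior_exists_single_Q_general n M v hmono P hQ
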